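/- arXiv:2212.01518 — 2 statements merged into one kernel-verified Lean document; each statement's English description precedes it below -/
import Mathlib

section
/- For probability measures P and Q with densities f and h with respect to a common dominating measure, and any intermediate probability measure with density g, the χ²-divergence satisfies χ²(P, Q) ≤ 2·‖g/h‖_∞ · χ²(P, G) + 2·χ²(G, Q), where G is the measure with density g and ‖g/h‖_∞ is the essential supremum of g/h. -/
open MeasureTheory

/-- Pseudo triangle inequality for the χ²-divergence in terms of densities:
if `f, g, h` are probability densities (of `P`, `G`, `Q`) with respect to a common
dominating measure `μ`, all with the same (full) support, then
`χ²(P,Q) ≤ 2‖g/h‖_∞ χ²(P,G) + 2 χ²(G,Q)`, where `χ²(A,B) = (1/2)∫ (a-b)²/b dμ`. -/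
theorem stmt_1 {Ξ : Type*} [MeasurableSpace Ξ] (μ : Measure Ξ)
    (f g h : Ξ → ℝ) (hf : Measurable f) (hg : Measurable g) (hh : Measurable h)
    (hf0 : ∀ x, 0 < f x) (hg0 : ∀ x, 0 < g x) (hh0 : ∀ x, 0 < h x)
    (hfInt : ∫ x, f x ∂μ = 1) (hgInt : ∫ x, g x ∂μ = 1) (hhInt : ∫ x, h x ∂μ = 1)
    (hInt1 : Integrable (fun x => (f x - h x) ^ 2 / h x) μ)
    (hInt2 : Integrable (fun x => (f x - g x) ^ 2 / g x) μ)
    (hInt3 : Integrable (fun x => (g x - h x) ^ 2 / h x) μ)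
    (hratio : Filter.IsBoundedUnder (· ≤ ·) (MeasureTheory.ae μ) (fun x => g x / h x)) :
    (1 / 2) * ∫ x, (f x - h x) ^ 2 / h x ∂μ ≤
      2 * (essSup (fun x => g x / h x) μ) * ((1 / 2) * ∫ x, (f x - g x) ^ 2 / g x ∂μ)
        + 2 * ((1 / 2) * ∫ x, (g x - h x) ^ 2 / h x ∂μ) := by
  set M : ℝ := essSup (fun x => g x / h x) μ with hMdef
  have hM : ∀ᵐ x ∂μ, g x / h x ≤ M := ae_le_essSup hratio
  -- pointwise inequality a.e.
  have hpt : ∀ᵐ x ∂μ, (f x - h x) ^ 2 / h x ≤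
      2 * M * ((f x - g x) ^ 2 / g x) + 2 * ((g x - h x) ^ 2 / h x) := by
    filter_upwards [hM] with x hx
    have hhx := hh0 x
    have hgx := hg0 x
    have h1 : (f x - h x) ^ 2 / h x ≤
        2 * ((f x - g x) ^ 2 / h x) + 2 * ((g x - h x) ^ 2 / h x) := by
      have : (f x - h x) ^ 2 ≤ 2 * (f x - g x) ^ 2 + 2 * (g x - h x) ^ 2 := by
        nlinarith [sq_nonneg (f x - 2 * g x + h x)]
      calc (f x - h x) ^ 2 / h x
          ≤ (2 * (f x - g x) ^ 2 + 2 * (g x - h x) ^ 2) / h x :=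
            by gcongr
        _ = 2 * ((f x - g x) ^ 2 / h x) + 2 * ((g x - h x) ^ 2 / h x) := by ring
    have h2 : (f x - g x) ^ 2 / h x ≤ M * ((f x - g x) ^ 2 / g x) := by
      have heq : (f x - g x) ^ 2 / h x = (g x / h x) * ((f x - g x) ^ 2 / g x) := by
        field_simp
      rw [heq]
      exact mul_le_mul_of_nonneg_right hx (by positivity)
    nlinarith [h2]
  -- integrability of the RHS
  have hIntR : Integrable
      (fun x => 2 * M * ((f x - g x) ^ 2 / g x) + 2 * ((g x - h x) ^ 2 / h x)) μ :=
    (hInt2.const_mul _).add (hInt3.const_mul _)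
  have key : ∫ x, (f x - h x) ^ 2 / h x ∂μ ≤
      ∫ x, (2 * M * ((f x - g x) ^ 2 / g x) + 2 * ((g x - h x) ^ 2 / h x)) ∂μ :=
    integral_mono_ae hInt1 hIntR hpt
  rw [integral_add (hInt2.const_mul _) (hInt3.const_mul _), integral_const_mul,
    integral_const_mul] at key
  linarith
end

section
/- Let Q̂ be a probability measure, ε > 0, and h : Ξ → ℝ bounded measurable. For any probability measure P with P ≪ Q̂ and χ²(P, Q̂) ≤ ε, we have E_P[h] ≤ E_{Q̂}[h] + sqrt(2·ε·Var_{Q̂}[h]), where χ²(P,Q̂) = (1/2)·E_{Q̂}[(dP/dQ̂ - 1)²]. -/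
open MeasureTheory

/-- Worst-case expectation bound over a χ²-divergence ball: if `P ≪ Q̂` with density
`ρ = dP/dQ̂` and `χ²(P,Q̂) = (1/2) E_{Q̂}[(ρ-1)²] ≤ ε`, then for bounded measurable `h`,
`E_P[h] ≤ E_{Q̂}[h] + sqrt(2 ε Var_{Q̂}[h])`. -/
theorem stmt_8 {Ξ : Type*} [MeasurableSpace Ξ]
    (P Qhat : Measure Ξ) [IsProbabilityMeasure P] [IsProbabilityMeasure Qhat]
    (ε : ℝ) (hε : 0 < ε)
    (ρ : Ξ → ℝ) (hρmeas : Measurable ρ) (hρnn : ∀ x, 0 ≤ ρ x)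
    (hPQ : P = Qhat.withDensity (fun x => ENNReal.ofReal (ρ x)))
    (hρ2 : Integrable (fun x => (ρ x - 1) ^ 2) Qhat)
    (hchi : (1 / 2) * ∫ x, (ρ x - 1) ^ 2 ∂Qhat ≤ ε)
    (h : Ξ → ℝ) (hmeas : Measurable h) (M : ℝ) (hb : ∀ x, |h x| ≤ M) :
    ∫ x, h x ∂P ≤ (∫ x, h x ∂Qhat) +
      Real.sqrt (2 * ε * ((∫ x, h x ^ 2 ∂Qhat) - (∫ x, h x ∂Qhat) ^ 2)) := by
  set μQ : ℝ := ∫ x, h x ∂Qhat with hμQ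
  -- Memℒp facts for ρ - 1
  have hρ1_mem2 : MemLp (fun x => ρ x - 1) 2 Qhat := by
    rw [memLp_two_iff_integrable_sq (f := fun x => ρ x - 1) ((hρmeas.sub measurable_const).aestronglyMeasurable)]
    exact hρ2
  have hρ1_int : Integrable (fun x => ρ x - 1) Qhat :=
    (hρ1_mem2.mono_exponent (by norm_num)).integrable le_rfl
  have hρ_int : Integrable ρ Qhat := by
    have h2 : Integrable (fun x => (ρ x - 1) + 1) Qhat := hρ1_int.add (integrable_const (1 : ℝ))
    exact h2.congr (Filter.Eventually.of_forall fun x => by ring)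
  -- transfer integrals against P to integrals against Qhat
  have key : ∀ g : Ξ → ℝ, ∫ x, g x ∂P = ∫ x, ρ x * g x ∂Qhat := by
    intro g
    rw [hPQ]
    have hcoe : (fun x => ENNReal.ofReal (ρ x)) = fun x => ((Real.toNNReal (ρ x) : NNReal) : ENNReal) := by
      funext x; simp [ENNReal.ofReal]
    rw [hcoe, integral_withDensity_eq_integral_smul
      (by exact measurable_real_toNNReal.comp hρmeas : Measurable fun x => (ρ x).toNNReal) g]
    refine integral_congr_ae (Filter.Eventually.of_forall fun x => ?_)
    simp [NNReal.smul_def, Real.coe_toNNReal _ (hρnn x)]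
  -- ∫ ρ dQhat = 1
  have hρ_one : ∫ x, ρ x ∂Qhat = 1 := by
    have := key (fun _ => (1 : ℝ))
    simpa using this.symm
  -- boundedness / integrability of h and friends
  have h_int : Integrable h Qhat :=
    Integrable.mono' (integrable_const M) hmeas.aestronglyMeasurable
      (Filter.Eventually.of_forall fun x => by simpa using hb x)
  have hg_bdd : ∀ x, ‖h x - μQ‖ ≤ M + ‖μQ‖ := fun x => by
    calc ‖h x - μQ‖ ≤ ‖h x‖ + ‖μQ‖ := norm_sub_le _ _
    _ ≤ M + ‖μQ‖ := by have := hb x; simp only [Real.norm_eq_abs]; linarith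
  have hg_mem2 : MemLp (fun x => h x - μQ) 2 Qhat :=
    (memLp_top_of_bound ((hmeas.sub measurable_const).aestronglyMeasurable) _
      (Filter.Eventually.of_forall hg_bdd)).mono_exponent le_top
  -- integrability of products
  have hρh_int : Integrable (fun x => ρ x * h x) Qhat := by
    have := hρ_int.bdd_mul hmeas.aestronglyMeasurable (Filter.Eventually.of_forall fun x => by simpa using hb x)
    exact this.congr (Filter.Eventually.of_forall fun x => mul_comm _ _)
  have hfg_int : Integrable (fun x => (ρ x - 1) * (h x - μQ)) Qhat := by
    have := hρ1_int.bdd_mul ((hmeas.sub measurable_const).aestronglyMeasurable)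
      (Filter.Eventually.of_forall hg_bdd)
    exact this.congr (Filter.Eventually.of_forall fun x => mul_comm _ _)
  -- key identity: ∫ h dP - μQ = ∫ (ρ-1)(h-μQ) dQhat
  have hid : ∫ x, h x ∂P - μQ = ∫ x, (ρ x - 1) * (h x - μQ) ∂Qhat := by
    have expand : ∀ x, (ρ x - 1) * (h x - μQ) = ρ x * h x - μQ * ρ x - (h x - μQ) := by
      intro x; ring
    have A : Integrable (fun x => ρ x * h x - μQ * ρ x) Qhat :=
      hρh_int.sub (hρ_int.const_mul μQ)
    have B : Integrable (fun x => h x - μQ) Qhat := h_int.sub (integrable_const μQ)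
    rw [key h]
    rw [show (fun x => (ρ x - 1) * (h x - μQ)) =
      fun x => (ρ x * h x - μQ * ρ x) - (h x - μQ) from funext expand]
    rw [integral_sub A B, integral_sub hρh_int (hρ_int.const_mul μQ),
      integral_sub h_int (integrable_const μQ),
      integral_const_mul μQ ρ, hρ_one, integral_const]
    simp
    exact hμQ
  -- integrability of h²
  have h2_int : Integrable (fun x => h x ^ 2) Qhat :=
    Integrable.mono' (integrable_const (M ^ 2)) ((hmeas.pow_const 2).aestronglyMeasurable)
      (Filter.Eventually.of_forall fun x => by
        rw [Real.norm_eq_abs, abs_pow, sq_abs, ← sq_abs]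
        exact pow_le_pow_left₀ (abs_nonneg _) (hb x) 2)
  -- variance identity
  have hvar : ∫ x, (h x - μQ) ^ 2 ∂Qhat = (∫ x, h x ^ 2 ∂Qhat) - μQ ^ 2 := by
    have expand : ∀ x, (h x - μQ) ^ 2 = h x ^ 2 - (2 * μQ) * h x + μQ ^ 2 := fun x => by ring
    rw [show (fun x => (h x - μQ) ^ 2) =
      fun x => (h x ^ 2 - (2 * μQ) * h x) + μQ ^ 2 from funext expand]
    have A : Integrable (fun x => h x ^ 2 - (2 * μQ) * h x) Qhat :=
      h2_int.sub (h_int.const_mul _)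
    rw [integral_add A (integrable_const _), integral_sub h2_int (h_int.const_mul _),
      integral_const_mul (2 * μQ) h, integral_const]
    simp only [measure_univ, probReal_univ, ENNReal.toReal_one, smul_eq_mul, one_mul, ← hμQ]
    ring
  have hvar_nonneg : 0 ≤ (∫ x, h x ^ 2 ∂Qhat) - μQ ^ 2 := by
    rw [← hvar]; exact integral_nonneg fun x => sq_nonneg _
  -- Cauchy–Schwarz
  have hCS : ∫ x, (ρ x - 1) * (h x - μQ) ∂Qhat ≤
      Real.sqrt (∫ x, (ρ x - 1) ^ 2 ∂Qhat) * Real.sqrt (∫ x, (h x - μQ) ^ 2 ∂Qhat) := by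
    have hpq : Real.HolderConjugate 2 2 := ⟨by norm_num, by norm_num, by norm_num⟩
    have e2 : ENNReal.ofReal (2 : ℝ) = 2 := by norm_num
    have h1 : MemLp (fun x => ρ x - 1) (ENNReal.ofReal (2 : ℝ)) Qhat := by
      rw [e2]; exact hρ1_mem2
    have h2 : MemLp (fun x => h x - μQ) (ENNReal.ofReal (2 : ℝ)) Qhat := by
      rw [e2]; exact hg_mem2
    have hHolder := MeasureTheory.integral_mul_norm_le_Lp_mul_Lq hpq h1 h2
    have conv : ∀ f : Ξ → ℝ, (∫ x, ‖f x‖ ^ (2 : ℝ) ∂Qhat) = ∫ x, f x ^ 2 ∂Qhat := by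
      intro f
      refine integral_congr_ae (Filter.Eventually.of_forall fun x => ?_)
      show ‖f x‖ ^ (2 : ℝ) = f x ^ 2
      rw [show (2 : ℝ) = ((2 : ℕ) : ℝ) by norm_num, Real.rpow_natCast, Real.norm_eq_abs, sq_abs]
    calc ∫ x, (ρ x - 1) * (h x - μQ) ∂Qhat
        ≤ ‖∫ x, (ρ x - 1) * (h x - μQ) ∂Qhat‖ := Real.le_norm_self _
      _ ≤ ∫ x, ‖(ρ x - 1) * (h x - μQ)‖ ∂Qhat := norm_integral_le_integral_norm _
      _ = ∫ x, ‖ρ x - 1‖ * ‖h x - μQ‖ ∂Qhat := by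
          refine integral_congr_ae (Filter.Eventually.of_forall fun x => ?_)
          exact norm_mul _ _
      _ ≤ (∫ x, ‖ρ x - 1‖ ^ (2 : ℝ) ∂Qhat) ^ ((1 : ℝ) / 2) *
            (∫ x, ‖h x - μQ‖ ^ (2 : ℝ) ∂Qhat) ^ ((1 : ℝ) / 2) := hHolder
      _ = Real.sqrt (∫ x, (ρ x - 1) ^ 2 ∂Qhat) * Real.sqrt (∫ x, (h x - μQ) ^ 2 ∂Qhat) := by
          rw [conv, conv, ← Real.sqrt_eq_rpow, ← Real.sqrt_eq_rpow]
  -- assemble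
  have hρ2ε : ∫ x, (ρ x - 1) ^ 2 ∂Qhat ≤ 2 * ε := by linarith
  have sqrt_bound : Real.sqrt (∫ x, (ρ x - 1) ^ 2 ∂Qhat) ≤ Real.sqrt (2 * ε) :=
    Real.sqrt_le_sqrt hρ2ε
  have final : ∫ x, h x ∂P ≤ μQ +
      Real.sqrt (2 * ε) * Real.sqrt ((∫ x, h x ^ 2 ∂Qhat) - μQ ^ 2) := by
    have := hCS
    rw [hvar] at this
    nlinarith [Real.sqrt_nonneg ((∫ x, h x ^ 2 ∂Qhat) - μQ ^ 2),
      Real.sqrt_nonneg (∫ x, (ρ x - 1) ^ 2 ∂Qhat), hid]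
  calc ∫ x, h x ∂P ≤ μQ + Real.sqrt (2 * ε) * Real.sqrt ((∫ x, h x ^ 2 ∂Qhat) - μQ ^ 2) := final
    _ = μQ + Real.sqrt (2 * ε * ((∫ x, h x ^ 2 ∂Qhat) - μQ ^ 2)) := by
        rw [← Real.sqrt_mul (by positivity)]
end
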